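/- For every integer c ≥ 3, the extended graph G_{x,y}^{(c)} is c-colorable if and only if x and y are not disjoint, i.e., if and only if there exists a pair (i,j) ∈ {0,…,k−1}² with x[i,j] = y[i,j] = 1. -/

import Mathlib

/-- Vertices of the coloring lower-bound graph.  The side `s : Bool`
distinguishes Alice (`false`, the `a`'s) from Bob (`true`, the `b`'s), and
`ℓ : Bool` distinguishes index `1` (`false`) from index `2` (`true`).
So `node false false i = a_1^i`, `bar s ℓ i = s̄_ℓ^i`, `dbar s ℓ i = s̿_ℓ^i`,
`f s ℓ h = f_S^h`, `t s ℓ h = t_S^h`, `c false m = c_a^m`, `c true m = c_b^m`. -/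
inductive CVertex (k logk : ℕ) where
  | node (s ℓ : Bool) (i : Fin k)
  | bar (s ℓ : Bool) (i : Fin k)
  | dbar (s ℓ : Bool) (i : Fin k)
  | f (s ℓ : Bool) (h : Fin logk)
  | t (s ℓ : Bool) (h : Fin logk)
  | c (s : Bool) (m : Fin 3)
deriving DecidableEq

/-- The index, among `{0,1,2}`, of the `c`-node attached to the bit-nodes of the
sets indexed by `ℓ` (i.e. `1` for `ℓ = 1` and `2` for `ℓ = 2`). -/
def ownIdx (ℓ : Bool) : Fin 3 := if ℓ then 2 else 1

/-- The "other" index: `2` for `ℓ = 1` and `1` for `ℓ = 2`. -/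
def othIdx (ℓ : Bool) : Fin 3 := if ℓ then 1 else 2

/-- Base relation generating the edges (i)–(x) of the coloring lower-bound graph
`G_{x,y}`. -/
def cRel (k logk : ℕ) (x y : Fin k → Fin k → Bool) (u v : CVertex k logk) : Prop :=
  -- (i) each node s_ℓ^i is adjacent to exactly its bit-nodes bin(s_ℓ^i)
  (∃ (s ℓ : Bool) (i : Fin k) (h : Fin logk), u = CVertex.node s ℓ i ∧
    v = if i.val.testBit h.val then CVertex.t s ℓ h else CVertex.f s ℓ h) ∨
  -- (ii) the 4-cycles on the bit-nodes
  (∃ (ℓ : Bool) (h : Fin logk),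
    (u = CVertex.f false ℓ h ∧ v = CVertex.t false ℓ h) ∨
    (u = CVertex.t false ℓ h ∧ v = CVertex.f true ℓ h) ∨
    (u = CVertex.f true ℓ h ∧ v = CVertex.t true ℓ h) ∨
    (u = CVertex.t true ℓ h ∧ v = CVertex.f false ℓ h)) ∨
  -- (iii) the two triangles on the c-nodes, and c_a^m ~ c_b^m' for m ≠ m'
  (∃ (s : Bool) (m m' : Fin 3), m ≠ m' ∧ u = CVertex.c s m ∧ v = CVertex.c s m') ∨
  (∃ (m m' : Fin 3), m ≠ m' ∧ u = CVertex.c false m ∧ v = CVertex.c true m') ∨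
  -- (iv) the path edges (s_ℓ^i, s̄_ℓ^i), (s̄_ℓ^i, s̿_ℓ^i), (s̿_ℓ^i, s̄_ℓ^{i+1})
  (∃ (s ℓ : Bool) (i : Fin k), u = CVertex.node s ℓ i ∧ v = CVertex.bar s ℓ i) ∨
  (∃ (s ℓ : Bool) (i : Fin k), u = CVertex.bar s ℓ i ∧ v = CVertex.dbar s ℓ i) ∨
  (∃ (s ℓ : Bool) (i : Fin k) (hi : i.val + 1 < k),
    u = CVertex.dbar s ℓ i ∧ v = CVertex.bar s ℓ ⟨i.val + 1, hi⟩) ∨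
  -- (v) c_s^ℓ adjacent to every bit-node of the sets indexed by ℓ
  (∃ (s ℓ : Bool) (h : Fin logk), u = CVertex.c s (ownIdx ℓ) ∧
    (v = CVertex.f s ℓ h ∨ v = CVertex.t s ℓ h)) ∨
  -- (vi)–(ix) c_s^{oth ℓ} ~ s_ℓ^i, c_s^{own ℓ} ~ s̿_ℓ^i,
  --           c_s^{oth ℓ} ~ s̄_ℓ^0 and c_s^{oth ℓ} ~ s̿_ℓ^{k−1}
  (∃ (s ℓ : Bool) (i : Fin k), u = CVertex.c s (othIdx ℓ) ∧ v = CVertex.node s ℓ i) ∨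
  (∃ (s ℓ : Bool) (i : Fin k), u = CVertex.c s (ownIdx ℓ) ∧ v = CVertex.dbar s ℓ i) ∨
  (∃ (s ℓ : Bool) (i : Fin k), i.val = 0 ∧
    u = CVertex.c s (othIdx ℓ) ∧ v = CVertex.bar s ℓ i) ∨
  (∃ (s ℓ : Bool) (i : Fin k), i.val = k - 1 ∧
    u = CVertex.c s (othIdx ℓ) ∧ v = CVertex.dbar s ℓ i) ∨
  -- (x) the input edges
  (∃ i j : Fin k, x i j = false ∧
    u = CVertex.node false false i ∧ v = CVertex.node false true j) ∨
  (∃ i j : Fin k, y i j = false ∧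
    u = CVertex.node true false i ∧ v = CVertex.node true true j)

/-- The coloring lower-bound graph `G_{x,y}`. -/
def cGraph (k logk : ℕ) (x y : Fin k → Fin k → Bool) : SimpleGraph (CVertex k logk) :=
  SimpleGraph.fromRel (cRel k logk x y)

/-- The side of a vertex of the coloring lower-bound graph: `false` for Alice's
side `V_A` (the `a`-vertices and `c_a`-vertices), `true` for Bob's side `V_B`. -/
def side {k logk : ℕ} : CVertex k logk → Bool
  | .node s _ _ => s
  | .bar s _ _ => s
  | .dbar s _ _ => s
  | .f s _ _ => s
  | .t s _ _ => s
  | .c s _ => s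

/-- Vertices of the extended graph `G_{x,y}^{(c)}`: the vertices of `G_{x,y}`
together with the extra nodes `c_a^3, …, c_a^{c−1}` (encoded `Sum.inr (false, m)`)
and `c_b^3, …, c_b^{c−1}` (encoded `Sum.inr (true, m)`), `m : Fin (c − 3)`. -/
abbrev ECVertex (k logk c : ℕ) := CVertex k logk ⊕ (Bool × Fin (c - 3))

/-- Base relation generating the edges of the extended graph `G_{x,y}^{(c)}`:
the edges of `G_{x,y}`; each extra node `c_a^m` joined to every node of `V_A`
and to the other extra `c_a`-nodes; each extra node `c_b^m` joined to every node
of `V_B`, to the other extra `c_b`-nodes, and to `c_a^0, c_a^1, c_a^2`. -/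
def ecRel (k logk c : ℕ) (x y : Fin k → Fin k → Bool) :
    ECVertex k logk c → ECVertex k logk c → Prop
  | Sum.inl u, Sum.inl v => cRel k logk x y u v
  | Sum.inr (s, _), Sum.inl v =>
      side v = s ∨ (s = true ∧ ∃ m' : Fin 3, v = CVertex.c false m')
  | Sum.inl _, Sum.inr _ => False
  | Sum.inr (s, m), Sum.inr (s', m') => s = s' ∧ m ≠ m'

/-- The extended graph `G_{x,y}^{(c)}`. -/
def ecGraph (k logk c : ℕ) (x y : Fin k → Fin k → Bool) :
    SimpleGraph (ECVertex k logk c) :=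
  SimpleGraph.fromRel (ecRel k logk c x y)


/-!
The extra nodes of `G_{x,y}^{(c)}` on either side form, together with the triangle
`c_a^0 c_a^1 c_a^2`, a clique on `c` vertices that is joined to every other node of that side;
so in a `c`-coloring every node of `G_{x,y}` uses one of the three colors of the triangle, and
`G_{x,y}^{(c)}` is `c`-colorable iff `G_{x,y}` is 3-colorable.

Normalize a 3-coloring of `G_{x,y}` so that `c_a^m` and `c_b^m` get color `m`. A path
`s̄_ℓ^0 s̿_ℓ^0 s̄_ℓ^1 … s̿_ℓ^{k-1}` can only be colored if some `s_ℓ^i` gets color `0`; the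
bit-nodes of such a node then spell out `i` in binary, and the 4-cycles on the bit-nodes make
Alice's and Bob's bit-nodes spell out the same index. So `a_1^i, b_1^i, a_2^j, b_2^j` are all
colored `0` for some `i, j`, and as `a_1^i, a_2^j` (resp. `b_1^i, b_2^j`) are not adjacent,
`x[i,j] = y[i,j] = 1`. Conversely, such a pair `(i, j)` yields an explicit 3-coloring.
-/

open SimpleGraph

theorem SimpleGraph.Coloring.surjective_comp_of_pairwise_adj {V ι α : Type*} [Fintype ι]
    [Fintype α] {G : SimpleGraph V} (C : G.Coloring α) (f : ι → V)
    (hf : Pairwise fun i j ↦ G.Adj (f i) (f j)) (hcard : Fintype.card ι = Fintype.card α) :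
    (C ∘ f).Surjective :=
  ((Fintype.bijective_iff_injective_and_card _).2
    ⟨C.injective_comp_of_pairwise_adj f hf, hcard⟩).2

lemma ownIdx_ne_othIdx (ℓ : Bool) : ownIdx ℓ ≠ othIdx ℓ := by cases ℓ <;> decide

lemma ownIdx_ne_zero (ℓ : Bool) : ownIdx ℓ ≠ 0 := by cases ℓ <;> decide

lemma othIdx_ne_zero (ℓ : Bool) : othIdx ℓ ≠ 0 := by cases ℓ <;> decide

namespace cGraph

variable {k logk : ℕ} {x y : Fin k → Fin k → Bool}

lemma adj_of_rel {u v : CVertex k logk} (hne : u ≠ v) (h : cRel k logk x y u v) :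
    (cGraph k logk x y).Adj u v :=
  (fromRel_adj _ _ _).2 ⟨hne, Or.inl h⟩

lemma adj_node_t {s ℓ : Bool} {i : Fin k} {h : Fin logk} (hb : i.val.testBit h = true) :
    (cGraph k logk x y).Adj (.node s ℓ i) (.t s ℓ h) :=
  adj_of_rel (by simp) (Or.inl ⟨s, ℓ, i, h, rfl, by simp [hb]⟩)

lemma adj_node_f {s ℓ : Bool} {i : Fin k} {h : Fin logk} (hb : i.val.testBit h = false) :
    (cGraph k logk x y).Adj (.node s ℓ i) (.f s ℓ h) :=
  adj_of_rel (by simp) (Or.inl ⟨s, ℓ, i, h, rfl, by simp [hb]⟩)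

lemma adj_f_t (s ℓ : Bool) (h : Fin logk) : (cGraph k logk x y).Adj (.f s ℓ h) (.t s ℓ h) :=
  adj_of_rel (by simp) (by cases s <;> simp [cRel])

lemma adj_t_false_f_true (ℓ : Bool) (h : Fin logk) :
    (cGraph k logk x y).Adj (.t false ℓ h) (.f true ℓ h) :=
  adj_of_rel (by simp) (by simp [cRel])

lemma adj_t_true_f_false (ℓ : Bool) (h : Fin logk) :
    (cGraph k logk x y).Adj (.t true ℓ h) (.f false ℓ h) :=
  adj_of_rel (by simp) (by simp [cRel])

lemma adj_c_c (s : Bool) {m m' : Fin 3} (hm : m ≠ m') :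
    (cGraph k logk x y).Adj (.c s m) (.c s m') :=
  adj_of_rel (by simpa using hm) (by simp [cRel, hm])

lemma adj_c_false_c_true {m m' : Fin 3} (hm : m ≠ m') :
    (cGraph k logk x y).Adj (.c false m) (.c true m') :=
  adj_of_rel (by simp) (by simp [cRel, hm])

lemma adj_node_bar (s ℓ : Bool) (i : Fin k) :
    (cGraph k logk x y).Adj (.node s ℓ i) (.bar s ℓ i) :=
  adj_of_rel (by simp) (by simp [cRel])

lemma adj_bar_dbar (s ℓ : Bool) (i : Fin k) :
    (cGraph k logk x y).Adj (.bar s ℓ i) (.dbar s ℓ i) :=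
  adj_of_rel (by simp) (by simp [cRel])

lemma adj_dbar_bar_succ (s ℓ : Bool) (i : Fin k) (hi : i.val + 1 < k) :
    (cGraph k logk x y).Adj (.dbar s ℓ i) (.bar s ℓ ⟨i.val + 1, hi⟩) :=
  adj_of_rel (by simp) (by simp [cRel, hi])

lemma adj_c_own_f (s ℓ : Bool) (h : Fin logk) :
    (cGraph k logk x y).Adj (.c s (ownIdx ℓ)) (.f s ℓ h) :=
  adj_of_rel (by simp) (by simp [cRel])

lemma adj_c_own_t (s ℓ : Bool) (h : Fin logk) :
    (cGraph k logk x y).Adj (.c s (ownIdx ℓ)) (.t s ℓ h) :=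
  adj_of_rel (by simp) (by simp [cRel])

lemma adj_c_oth_node (s ℓ : Bool) (i : Fin k) :
    (cGraph k logk x y).Adj (.c s (othIdx ℓ)) (.node s ℓ i) :=
  adj_of_rel (by simp) (by simp [cRel])

lemma adj_c_own_dbar (s ℓ : Bool) (i : Fin k) :
    (cGraph k logk x y).Adj (.c s (ownIdx ℓ)) (.dbar s ℓ i) :=
  adj_of_rel (by simp) (by simp [cRel])

lemma adj_c_oth_bar_zero (s ℓ : Bool) (hk : 0 < k) :
    (cGraph k logk x y).Adj (.c s (othIdx ℓ)) (.bar s ℓ ⟨0, hk⟩) :=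
  adj_of_rel (by simp) (by simp [cRel])

lemma adj_c_oth_dbar_last (s ℓ : Bool) (hk : 0 < k) :
    (cGraph k logk x y).Adj (.c s (othIdx ℓ)) (.dbar s ℓ ⟨k - 1, by omega⟩) :=
  adj_of_rel (by simp) (by simp [cRel])

lemma adj_node_node_of_x {i j : Fin k} (hx : x i j = false) :
    (cGraph k logk x y).Adj (.node false false i) (.node false true j) :=
  adj_of_rel (by simp) (by simp [cRel, hx])

lemma adj_node_node_of_y {i j : Fin k} (hy : y i j = false) :
    (cGraph k logk x y).Adj (.node true false i) (.node true true j) :=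
  adj_of_rel (by simp) (by simp [cRel, hy])

def witnessColoring (p : Bool → Fin k) : CVertex k logk → Fin 3
  | .node _ ℓ i => if i = p ℓ then 0 else ownIdx ℓ
  | .bar _ ℓ i => if i < p ℓ then 0 else if i = p ℓ then ownIdx ℓ else othIdx ℓ
  | .dbar _ ℓ i => if i < p ℓ then othIdx ℓ else 0
  | .f _ ℓ h => if (p ℓ).val.testBit h then 0 else othIdx ℓ
  | .t _ ℓ h => if (p ℓ).val.testBit h then othIdx ℓ else 0
  | .c _ m => m

lemma witnessColoring_ne_of_rel {p : Bool → Fin k} (hx : x (p false) (p true) = true)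
    (hy : y (p false) (p true) = true) {u v : CVertex k logk} (h : cRel k logk x y u v) :
    witnessColoring p u ≠ witnessColoring p v := by
  rcases h with ⟨s, ℓ, i, h, rfl, rfl⟩ | ⟨ℓ, h, H⟩ | ⟨s, m, m', hm, rfl, rfl⟩ |
    ⟨m, m', hm, rfl, rfl⟩ | ⟨s, ℓ, i, rfl, rfl⟩ | ⟨s, ℓ, i, rfl, rfl⟩ |
    ⟨s, ℓ, i, hi, rfl, rfl⟩ | ⟨s, ℓ, h, rfl, rfl | rfl⟩ | ⟨s, ℓ, i, rfl, rfl⟩ |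
    ⟨s, ℓ, i, rfl, rfl⟩ | ⟨s, ℓ, i, hi, rfl, rfl⟩ | ⟨s, ℓ, i, hi, rfl, rfl⟩ |
    ⟨i, j, hxij, rfl, rfl⟩ | ⟨i, j, hyij, rfl, rfl⟩
  · split_ifs with hb <;> simp only [witnessColoring, ownIdx, othIdx] <;> split_ifs <;> simp_all
  · rcases H with ⟨rfl, rfl⟩ | ⟨rfl, rfl⟩ | ⟨rfl, rfl⟩ | ⟨rfl, rfl⟩ <;>
      simp only [witnessColoring, othIdx] <;> split_ifs <;> simp_all
  · simpa [witnessColoring] using hm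
  · simpa [witnessColoring] using hm
  all_goals simp only [witnessColoring, ownIdx, othIdx]; split_ifs <;>
    first | omega | (simp_all; done) |
      (simp only [Fin.ext_iff, Fin.lt_def] at *; omega)

lemma colorable_three_of_not_disjoint {i j : Fin k} (hx : x i j = true) (hy : y i j = true) :
    (cGraph k logk x y).Colorable 3 := by
  refine ⟨Coloring.mk (witnessColoring fun ℓ ↦ bif ℓ then j else i) fun huv ↦ ?_⟩
  obtain ⟨-, h | h⟩ := (fromRel_adj _ _ _).1 huv
  · exact witnessColoring_ne_of_rel hx hy h
  · exact (witnessColoring_ne_of_rel hx hy h).symm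

lemma exists_coloring_apply_c_eq (h : (cGraph k logk x y).Colorable 3) :
    ∃ C : (cGraph k logk x y).Coloring (Fin 3), ∀ s m, C (.c s m) = m := by
  obtain ⟨C⟩ := h
  have hbij : (C ∘ fun m ↦ .c false m).Bijective := Finite.injective_iff_bijective.1 <|
    C.injective_comp_of_pairwise_adj _ fun _ _ ↦ adj_c_c false
  let σ := Equiv.ofBijective _ hbij
  let C' : (cGraph k logk x y).Coloring (Fin 3) :=
    Coloring.mk (σ.symm ∘ C) fun huv ↦ σ.symm.injective.ne (C.valid huv)
  have hfalse (m : Fin 3) : C' (.c false m) = m := σ.symm_apply_apply m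
  refine ⟨C', fun s m ↦ ?_⟩
  cases s
  · exact hfalse m
  · by_contra hne
    exact C'.valid (adj_c_false_c_true hne) (hfalse _)

section NormalizedColoring

variable (C : (cGraph k logk x y).Coloring (Fin 3))

lemma apply_ne_of_adj_c (hC : ∀ s m, C (.c s m) = m) {s : Bool} {m : Fin 3}
    {v : CVertex k logk} (h : (cGraph k logk x y).Adj (.c s m) v) : C v ≠ m := by
  simpa [hC] using (C.valid h).symm

lemma apply_f_false_eq_apply_f_true (hC : ∀ s m, C (.c s m) = m) (ℓ : Bool) (h : Fin logk) :
    C (.f false ℓ h) = C (.f true ℓ h) := by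
  have := apply_ne_of_adj_c C hC (adj_c_own_f false ℓ h)
  have := apply_ne_of_adj_c C hC (adj_c_own_t false ℓ h)
  have := apply_ne_of_adj_c C hC (adj_c_own_f true ℓ h)
  have := C.valid (adj_f_t false ℓ h)
  have := C.valid (adj_f_t true ℓ h)
  have := C.valid (adj_t_false_f_true ℓ h)
  omega

lemma testBit_iff_apply_f_eq_zero (hC : ∀ s m, C (.c s m) = m) {s ℓ : Bool} {i : Fin k}
    (hi : C (.node s ℓ i) = 0) (h : Fin logk) :
    i.val.testBit h = true ↔ C (.f s ℓ h) = 0 := by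
  have := ownIdx_ne_othIdx ℓ
  have := ownIdx_ne_zero ℓ
  have := othIdx_ne_zero ℓ
  have := apply_ne_of_adj_c C hC (adj_c_own_f s ℓ h)
  have := apply_ne_of_adj_c C hC (adj_c_own_t s ℓ h)
  have := C.valid (adj_f_t s ℓ h)
  cases hb : i.val.testBit h
  · have := C.valid (adj_node_f (x := x) (y := y) (s := s) (ℓ := ℓ) hb)
    simp only [Bool.false_eq_true, false_iff]
    omega
  · have := C.valid (adj_node_t (x := x) (y := y) (s := s) (ℓ := ℓ) hb)
    simp only [true_iff]
    omega

lemma apply_dbar_eq_othIdx (hC : ∀ s m, C (.c s m) = m) {s ℓ : Bool} {i : Fin k}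
    (hnode : C (.node s ℓ i) ≠ 0) (hbar : C (.bar s ℓ i) ≠ othIdx ℓ) :
    C (.dbar s ℓ i) = othIdx ℓ := by
  have := ownIdx_ne_othIdx ℓ
  have := ownIdx_ne_zero ℓ
  have := othIdx_ne_zero ℓ
  have := apply_ne_of_adj_c C hC (adj_c_oth_node s ℓ i)
  have := apply_ne_of_adj_c C hC (adj_c_own_dbar s ℓ i)
  have := C.valid (adj_node_bar s ℓ i)
  have := C.valid (adj_bar_dbar s ℓ i)
  omega

lemma exists_apply_node_eq_zero (hC : ∀ s m, C (.c s m) = m) (hk : 0 < k) (s ℓ : Bool) :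
    ∃ i, C (.node s ℓ i) = 0 := by
  by_contra! hnode
  -- Every `s_ℓ^i` then has color `ownIdx ℓ`, which forces the path to alternate between the
  -- colors `0` and `othIdx ℓ`, so that its last node clashes with `c_s^{othIdx ℓ}`.
  have hdbar : ∀ n (hn : n < k), C (.dbar s ℓ ⟨n, hn⟩) = othIdx ℓ := by
    intro n
    induction n with
    | zero =>
      exact fun hn ↦ apply_dbar_eq_othIdx C hC (hnode _)
        (apply_ne_of_adj_c C hC (adj_c_oth_bar_zero s ℓ hn))
    | succ n ih =>
      refine fun hn ↦ apply_dbar_eq_othIdx C hC (hnode _) fun hbar ↦ ?_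
      exact C.valid (adj_dbar_bar_succ s ℓ ⟨n, by omega⟩ hn) ((ih (by omega)).trans hbar.symm)
  exact apply_ne_of_adj_c C hC (adj_c_oth_dbar_last s ℓ hk) (hdbar _ _)

lemma eq_of_apply_node_eq_zero (hC : ∀ s m, C (.c s m) = m) (hk : k ≤ 2 ^ logk) {ℓ : Bool}
    {i i' : Fin k} (hi : C (.node false ℓ i) = 0) (hi' : C (.node true ℓ i') = 0) : i = i' := by
  refine Fin.ext <| Nat.eq_of_testBit_eq fun h ↦ ?_
  by_cases hh : h < logk
  · rw [Bool.eq_iff_iff, testBit_iff_apply_f_eq_zero C hC hi ⟨h, hh⟩,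
      testBit_iff_apply_f_eq_zero C hC hi' ⟨h, hh⟩, apply_f_false_eq_apply_f_true C hC]
  · have h2 : 2 ^ logk ≤ 2 ^ h := Nat.pow_le_pow_right two_pos (by omega)
    rw [Nat.testBit_eq_false_of_lt (by omega), Nat.testBit_eq_false_of_lt (by omega)]

end NormalizedColoring

lemma not_disjoint_of_colorable_three (hk₀ : 0 < k) (hk : k ≤ 2 ^ logk)
    (h : (cGraph k logk x y).Colorable 3) : ∃ i j : Fin k, x i j = true ∧ y i j = true := by
  obtain ⟨C, hC⟩ := exists_coloring_apply_c_eq h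
  obtain ⟨i, hi⟩ := exists_apply_node_eq_zero C hC hk₀ false false
  obtain ⟨j, hj⟩ := exists_apply_node_eq_zero C hC hk₀ false true
  obtain ⟨i', hi'⟩ := exists_apply_node_eq_zero C hC hk₀ true false
  obtain ⟨j', hj'⟩ := exists_apply_node_eq_zero C hC hk₀ true true
  obtain rfl := eq_of_apply_node_eq_zero C hC hk hi hi'
  obtain rfl := eq_of_apply_node_eq_zero C hC hk hj hj'
  refine ⟨i, j, ?_, ?_⟩
  · by_contra hx
    exact C.valid (adj_node_node_of_x (Bool.eq_false_iff.2 hx)) (hi.trans hj.symm)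
  · by_contra hy
    exact C.valid (adj_node_node_of_y (Bool.eq_false_iff.2 hy)) (hi'.trans hj'.symm)

end cGraph

namespace ecGraph

variable {k logk c : ℕ} {x y : Fin k → Fin k → Bool}

lemma adj_inl_inl {u v : CVertex k logk} :
    (ecGraph k logk c x y).Adj (.inl u) (.inl v) ↔ (cGraph k logk x y).Adj u v := by
  simp only [ecGraph, cGraph, fromRel_adj, ne_eq, Sum.inl.injEq, ecRel]

lemma ne_of_adj_inr_inr {s s' : Bool} {m m' : Fin (c - 3)}
    (h : (ecGraph k logk c x y).Adj (.inr (s, m)) (.inr (s', m'))) : m ≠ m' := by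
  obtain ⟨-, ⟨-, hm⟩ | ⟨-, hm⟩⟩ := (fromRel_adj _ _ _).1 h
  exacts [hm, hm.symm]

lemma adj_inr_inr (s : Bool) {m m' : Fin (c - 3)} (hm : m ≠ m') :
    (ecGraph k logk c x y).Adj (.inr (s, m)) (.inr (s, m')) :=
  (fromRel_adj _ _ _).2 ⟨by simpa using hm, Or.inl ⟨rfl, hm⟩⟩

lemma adj_inr_inl_of_side {v : CVertex k logk} (m : Fin (c - 3)) :
    (ecGraph k logk c x y).Adj (.inr (side v, m)) (.inl v) :=
  (fromRel_adj _ _ _).2 ⟨by simp, Or.inl (Or.inl rfl)⟩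

lemma adj_inr_inl_c_false (s : Bool) (m : Fin (c - 3)) (j : Fin 3) :
    (ecGraph k logk c x y).Adj (.inr (s, m)) (.inl (.c false j)) :=
  (fromRel_adj _ _ _).2 ⟨by simp, Or.inl (by cases s <;> simp [ecRel, side])⟩

lemma colorable_of_cGraph_colorable_three (hc : 3 ≤ c) (h : (cGraph k logk x y).Colorable 3) :
    (ecGraph k logk c x y).Colorable c := by
  obtain ⟨C⟩ := h
  let C' : (ecGraph k logk c x y).Coloring (Fin 3 ⊕ Fin (c - 3)) :=
    Coloring.mk (Sum.map C Prod.snd) fun {u v} huv ↦ by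
      rcases u with u | ⟨s, m⟩ <;> rcases v with v | ⟨s', m'⟩
      · simpa using C.valid (adj_inl_inl.1 huv)
      · simp
      · simp
      · simpa using ne_of_adj_inr_inr huv
  simpa [hc] using C'.colorable

lemma cGraph_colorable_three_of_colorable (hc : 3 ≤ c) (h : (ecGraph k logk c x y).Colorable c) :
    (cGraph k logk x y).Colorable 3 := by
  obtain ⟨C⟩ := h
  let clique (s : Bool) : Fin (c - 3) ⊕ Fin 3 → ECVertex k logk c :=
    Sum.elim (fun m ↦ .inr (s, m)) (fun j ↦ .inl (.c false j))
  have hclique (s : Bool) :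
      Pairwise fun i j ↦ (ecGraph k logk c x y).Adj (clique s i) (clique s j) := by
    rintro (m | j) (m' | j') hne
    · exact adj_inr_inr s (by simpa using hne)
    · exact adj_inr_inl_c_false s m j'
    · exact (adj_inr_inl_c_false s m' j).symm
    · exact adj_inl_inl.2 (cGraph.adj_c_c false (by simpa using hne))
  have hthree (v : CVertex k logk) : ∃ j : Fin 3, C (.inl v) = C (.inl (.c false j)) := by
    obtain ⟨m | j, hj⟩ := C.surjective_comp_of_pairwise_adj (clique (side v)) (hclique _)
      (by simp only [Fintype.card_sum, Fintype.card_fin]; omega) (C (.inl v))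
    · exact (C.valid (adj_inr_inl_of_side m) hj).elim
    · exact ⟨j, hj.symm⟩
  choose g hg using hthree
  exact ⟨Coloring.mk g fun {u v} huv hguv ↦
    C.valid (adj_inl_inl.2 huv) (by rw [hg u, hg v, hguv])⟩

lemma colorable_iff_cGraph_colorable_three (hc : 3 ≤ c) :
    (ecGraph k logk c x y).Colorable c ↔ (cGraph k logk x y).Colorable 3 :=
  ⟨cGraph_colorable_three_of_colorable hc, colorable_of_cGraph_colorable_three hc⟩

end ecGraph

theorem ecGraph_colorable_iff_not_disjoint_general (k logk c : ℕ)
    (hpow : k = 2 ^ logk) (hc : 3 ≤ c) (x y : Fin k → Fin k → Bool) :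
    (ecGraph k logk c x y).Colorable c ↔
      ∃ i j : Fin k, x i j = true ∧ y i j = true := by
  rw [ecGraph.colorable_iff_cGraph_colorable_three hc]
  refine ⟨cGraph.not_disjoint_of_colorable_three (hpow ▸ Nat.two_pow_pos logk) hpow.le, ?_⟩
  rintro ⟨i, j, hx, hy⟩
  exact cGraph.colorable_three_of_not_disjoint hx hy

/-- for every integer `c ≥ 3`, the extended graph `G_{x,y}^{(c)}`
is `c`-colorable iff `x` and `y` are not disjoint, i.e. iff there is a pair
`(i, j)` with `x i j = y i j = 1`. -/
theorem ecGraph_colorable_iff_not_disjoint (k logk c : ℕ) (hk : 2 ≤ k)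
    (hpow : k = 2 ^ logk) (hc : 3 ≤ c) (x y : Fin k → Fin k → Bool) :
    (ecGraph k logk c x y).Colorable c ↔
      ∃ i j : Fin k, x i j = true ∧ y i j = true :=
  ecGraph_colorable_iff_not_disjoint_general k logk c hpow hc x y
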